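/- arXiv:1205.5320 — 3 statements merged into one kernel-verified Lean document; each statement's English description precedes it below -/
import Mathlib

section
/- Let α be a finite type, let n ≥ 1, and for each k ∈ {1,…,n} let p_k, a_k ∈ α with a_k ≠ p_k; define g_k : α → α by g_k(p_k) = a_k and g_k(x) = x for all x ≠ p_k. Set g = g_n ∘ ⋯ ∘ g_1 and read indices modulo n (so p_{n+1} := p_1 and a_{n+1} := a_1). Then the set of periodic points of g has exactly (Fintype.card α) − 1 elements if and only if for every k ∈ {1,…,n} either p_k = p_{k+1} or p_k = a_{k+1}. Moreover, if this condition holds, then the range of g is exactly α \ {p_n}. -/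
/-!
Each fold `update id p a` maps everything into `{p}ᶜ` and is injective on `{q}ᶜ` exactly when
`q ∈ {p, a}`. All sets `{q}ᶜ` have the same size, so the composite `g` is injective on
`{p_n}ᶜ` iff every step `g_{k+1}` is injective on `{p_k}ᶜ`, i.e. iff the cyclic condition holds.
Since `periodicPts g ⊆ range g ⊆ {p_n}ᶜ` and `g` permutes its periodic points, `g` has
`card α - 1` periodic points iff it is a bijection of `{p_n}ᶜ`, which for a self-map of a finite
set is injectivity; then also `{p_n}ᶜ = g '' {p_n}ᶜ ⊆ range g`.
-/

open Function Set

section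

variable {α : Type*}

/-- `compOfFn f = f (n - 1) ∘ ⋯ ∘ f 0`. -/
def compOfFn {n : ℕ} (f : Fin n → α → α) : α → α :=
  (List.ofFn f).foldl (fun acc h => h ∘ acc) id

theorem compOfFn_zero (f : Fin 0 → α → α) : compOfFn f = id := rfl

theorem compOfFn_succ {n : ℕ} (f : Fin (n + 1) → α → α) :
    compOfFn f = f (Fin.last n) ∘ compOfFn fun k : Fin n => f k.castSucc := by
  rw [compOfFn, List.ofFn_succ', List.concat_eq_append, List.foldl_concat]
  rfl

theorem compOfFn_ne {n : ℕ} {f : Fin (n + 1) → α → α} {r : Fin (n + 1) → α}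
    (hf : ∀ k x, f k x ≠ r k) (x : α) : compOfFn f x ≠ r (Fin.last n) := by
  rw [compOfFn_succ]
  exact hf _ _

theorem Set.BijOn.subset_periodicPts {f : α → α} {s : Set α} (hs : s.Finite) (h : BijOn f s s) :
    s ⊆ periodicPts f := by
  have : Finite s := hs
  intro x hx
  have hsemi : Semiconj ((↑) : s → α) (h.mapsTo.restrict f s s) f := fun _ => rfl
  exact hsemi.mapsTo_periodicPts ((h.mapsTo.restrict_inj.2 h.injOn).mem_periodicPts ⟨x, hx⟩)

theorem Set.injOn_comp_iff_of_mapsTo {β γ : Type*} {f : β → γ} {g : α → β} {s : Set α}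
    {t : Set β} (hmaps : MapsTo g s t) (ht : t.Finite) (hcard : t.ncard ≤ s.ncard) :
    InjOn (f ∘ g) s ↔ InjOn g s ∧ InjOn f t := by
  refine ⟨fun h => ⟨h.of_comp, ?_⟩, fun ⟨hg, hf⟩ => hf.comp hg hmaps⟩
  have himage : g '' s = t :=
    eq_of_subset_of_ncard_le hmaps.image_subset (by rwa [h.of_comp.ncard_image]) ht
  simpa only [himage] using h.image_of_comp

theorem Set.ncard_compl_singleton [Finite α] (q : α) :
    ({q}ᶜ : Set α).ncard = Nat.card α - 1 := by
  rw [ncard_compl, ncard_singleton]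

section Update

variable [DecidableEq α] {p a : α}

theorem update_id_ne (h : a ≠ p) (x : α) : update id p a x ≠ p := by
  rcases eq_or_ne x p with rfl | hx <;> simp [*]

theorem injOn_update_id_iff (h : a ≠ p) {s : Set α} :
    InjOn (update id p a) s ↔ (p ∈ s → a ∉ s) := by
  refine ⟨fun hinj hp ha => h (hinj ha hp (by simp [update_of_ne h])), fun hs x hx y hy hxy => ?_⟩
  grind [update_apply]

theorem injOn_update_id_compl_singleton_iff (h : a ≠ p) {q : α} :
    InjOn (update id p a) {q}ᶜ ↔ q = p ∨ q = a := by
  rw [injOn_update_id_iff h]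
  grind

end Update

theorem injOn_compOfFn_compl_singleton_iff [Finite α] {n : ℕ} {f : Fin (n + 1) → α → α}
    {r : Fin (n + 1) → α} (hf : ∀ k x, f k x ≠ r k) (q : α) :
    InjOn (compOfFn f) {q}ᶜ ↔
      InjOn (f 0) {q}ᶜ ∧ ∀ k : Fin n, InjOn (f k.succ) {r k.castSucc}ᶜ := by
  induction n with
  | zero => simp [compOfFn_succ, compOfFn_zero]
  | succ n ih =>
    have hmaps : MapsTo (compOfFn fun k : Fin (n + 1) => f k.castSucc) {q}ᶜ
        {r (Fin.last n).castSucc}ᶜ := fun x _ => compOfFn_ne (fun k => hf k.castSucc) x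
    rw [compOfFn_succ, injOn_comp_iff_of_mapsTo hmaps (toFinite _)
      (by rw [ncard_compl_singleton, ncard_compl_singleton]), ih (fun k => hf k.castSucc),
      Fin.forall_fin_succ', and_assoc]
    simp only [Fin.succ_castSucc, Fin.castSucc_zero, Fin.succ_last]

end

/-- Let `α` be a finite type and, for each `k : Fin (n+1)`, let
`g k = Function.update id (p k) (a k)` (the map sending `p k` to `a k` and fixing
everything else, where `a k ≠ p k`).  Let `g = g_n ∘ ⋯ ∘ g_0` and read indices
cyclically (`Fin (n+1)` addition).  Then `g` has exactly `card α - 1` periodic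
points iff for every `k` either `p k = p (k+1)` or `p k = a (k+1)`; moreover, if
this condition holds then the range of `g` is exactly `α \ {p (last index)}`. -/
theorem stmt0 {α : Type*} [Fintype α] [DecidableEq α] (n : ℕ)
    (p a : Fin (n + 1) → α) (ha : ∀ k, a k ≠ p k) (g : α → α)
    (hg : g = (List.ofFn fun k : Fin (n + 1) =>
        Function.update (id : α → α) (p k) (a k)).foldl (fun acc f => f ∘ acc) id) :
    (((Function.periodicPts g).ncard = Fintype.card α - 1) ↔
      ∀ k : Fin (n + 1), p k = p (k + 1) ∨ p k = a (k + 1)) ∧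
    ((∀ k : Fin (n + 1), p k = p (k + 1) ∨ p k = a (k + 1)) →
      Set.range g = {p (Fin.last n)}ᶜ) := by
  set S : Set α := {p (Fin.last n)}ᶜ
  have hne : ∀ k x, update id (p k) (a k) x ≠ p k := fun k => update_id_ne (ha k)
  replace hg : g = compOfFn fun k => update id (p k) (a k) := hg
  have hmaps : ∀ x, g x ∈ S := fun x => hg ▸ compOfFn_ne hne x
  have hbij : BijOn g S S ↔ ∀ k, p k = p (k + 1) ∨ p k = a (k + 1) := by
    rw [← (toFinite S).injOn_iff_bijOn_of_mapsTo fun x _ => hmaps x, hg,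
      injOn_compOfFn_compl_singleton_iff hne, Fin.forall_fin_succ', Fin.last_add_one, and_comm]
    simp only [Fin.coeSucc_eq_succ, injOn_update_id_compl_singleton_iff (ha _)]
  have hper : periodicPts g ⊆ S := periodicPts_subset_range.trans (range_subset_iff.2 hmaps)
  have hperiodic : (periodicPts g).ncard = Fintype.card α - 1 ↔ periodicPts g = S := by
    rw [← Nat.card_eq_fintype_card, ← ncard_compl_singleton (p (Fin.last n))]
    exact ⟨fun h => eq_of_subset_of_ncard_le hper h.ge, fun h => h ▸ rfl⟩
  have hperiodic_bij : periodicPts g = S ↔ BijOn g S S :=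
    ⟨fun h => h ▸ bijOn_periodicPts g, fun h => hper.antisymm (h.subset_periodicPts (toFinite S))⟩
  refine ⟨hperiodic.trans (hperiodic_bij.trans hbij), fun h => ?_⟩
  exact (range_subset_iff.2 hmaps).antisymm ((hbij.2 h).image_eq ▸ image_subset_range g S)
end

section
/- Let α be a finite type, n ≥ 1, and g_1, …, g_n : α → α arbitrary functions. For each k ∈ {1,…,n} set f_k := g_k ∘ ⋯ ∘ g_1 ∘ g_n ∘ ⋯ ∘ g_{k+1} (the cyclic rotation of the composition, with f_n = g_n ∘ ⋯ ∘ g_1). Then for all k, l ∈ {1,…,n}, the number of gates of f_k equals the number of gates of f_l, and the number of periodic points of f_k equals the number of periodic points of f_l. -/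
/-!
Consecutive rotations have the form `w ∘ g (k + 1)` and `g (k + 1) ∘ w`, so it suffices to compare
`v ∘ u` with `u ∘ v` for `u : α → β`, `v : β → α`. The map `u` is a bijection from the periodic
points of `v ∘ u` onto those of `u ∘ v`, since each composite permutes its own periodic points.
It also induces a bijection on gates: `u ∘ (v ∘ u)^[m] = (u ∘ v)^[m] ∘ u` carries the gate
relation forward, applying `v` once more carries it back, and by finiteness the orbit of any `z`
returns, so `z` shares its gate with some `(u ∘ v)^[m + 1] z`, which lies in the range of `u`.
-/

/-- The set of gates of `f`: the equivalence classes of the relation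
`x ~ y ↔ ∃ m ≥ 1, f^[m] x = f^[m] y`. -/
def gates {α : Type*} (f : α → α) : Set (Set α) :=
  {C | ∃ x, C = {y | ∃ m, 0 < m ∧ f^[m] x = f^[m] y}}

/-- `compSeqFn g l k = g k ∘ g (k - 1) ∘ ⋯ ∘ g l` (the identity if `k + 1 ≤ l`). -/
def compSeqFn {α : Type*} (g : ℕ → α → α) (l k : ℕ) : α → α :=
  (List.range (k + 1 - l)).foldl (fun acc t => g (l + t) ∘ acc) id

open Function Set

section Dynamics

variable {α β : Type*}

theorem semiconj_comp_comp (u : α → β) (v : β → α) : Semiconj u (v ∘ u) (u ∘ v) :=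
  fun _ => rfl

def gateSetoid (f : α → α) : Setoid α where
  r x y := ∃ m, 0 < m ∧ f^[m] x = f^[m] y
  iseqv :=
    { refl := fun _ => ⟨1, one_pos, rfl⟩
      symm := fun ⟨m, hm, h⟩ => ⟨m, hm, h.symm⟩
      trans := fun {x y z} ⟨m, hm, hxy⟩ ⟨p, _, hyz⟩ => ⟨m + p, by omega, by
        rw [add_comm, iterate_add_apply, hxy, ← iterate_add_apply, add_comm, iterate_add_apply,
          hyz, ← iterate_add_apply]⟩ }

theorem gates_eq_classes (f : α → α) : gates f = (gateSetoid f).classes :=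
  Set.ext fun _ => exists_congr fun _ => by
    simp only [Setoid.comm' (gateSetoid f)]
    rfl

theorem ncard_gates (f : α → α) : (gates f).ncard = Nat.card (Quotient (gateSetoid f)) := by
  rw [gates_eq_classes, ← Nat.card_coe_set_eq]
  exact Nat.card_congr (Setoid.quotientEquivClasses _).symm

theorem gateSetoid_comp_iff (u : α → β) (v : β → α) {x y : α} :
    gateSetoid (v ∘ u) x y ↔ gateSetoid (u ∘ v) (u x) (u y) := by
  have hu := semiconj_comp_comp u v
  have hv := semiconj_comp_comp v u
  constructor
  · rintro ⟨m, hm, h⟩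
    exact ⟨m, hm, by rw [← hu.iterate_right, ← hu.iterate_right, h]⟩
  · rintro ⟨m, hm, h⟩
    refine ⟨m + 1, m.succ_pos, ?_⟩
    rw [iterate_succ_apply, iterate_succ_apply]
    exact (hv.iterate_right m (u x)).symm.trans ((congrArg v h).trans (hv.iterate_right m (u y)))

theorem exists_gateSetoid_iterate_succ [Finite α] (f : α → α) (z : α) :
    ∃ m, gateSetoid f z (f^[m + 1] z) := by
  obtain ⟨i, j, hne, hij⟩ := Finite.exists_ne_map_eq_of_infinite fun m : ℕ => f^[m] z
  wlog hlt : i < j generalizing i j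
  · exact this j i hne.symm hij.symm (by omega)
  obtain ⟨m, rfl⟩ : ∃ m, j = i + (m + 1) := ⟨j - i - 1, by omega⟩
  refine ⟨m, i + (m + 1), by omega, ?_⟩
  calc f^[i + (m + 1)] z = f^[m + 1] (f^[i] z) := by rw [add_comm, iterate_add_apply]
    _ = f^[m + 1] (f^[i + (m + 1)] z) := by rw [hij]
    _ = f^[i + (m + 1)] (f^[m + 1] z) := by rw [← iterate_add_apply, ← iterate_add_apply, add_comm]

theorem exists_gateSetoid_comp_apply [Finite β] (u : α → β) (v : β → α) (z : β) :
    ∃ x, gateSetoid (u ∘ v) z (u x) := by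
  obtain ⟨m, h⟩ := exists_gateSetoid_iterate_succ (u ∘ v) z
  exact ⟨(v ∘ u)^[m] (v z), by rwa [(semiconj_comp_comp u v).iterate_right, ← comp_apply (f := u), ← iterate_succ_apply]⟩

theorem ncard_gates_comp [Finite β] (u : α → β) (v : β → α) :
    (gates (v ∘ u)).ncard = (gates (u ∘ v)).ncard := by
  rw [ncard_gates, ncard_gates]
  refine Nat.card_eq_of_bijective (Quot.map u fun _ _ => (gateSetoid_comp_iff u v).1) ⟨?_, ?_⟩
  · rintro ⟨x⟩ ⟨y⟩ h
    exact Quot.sound ((gateSetoid_comp_iff u v).2 (Quotient.exact h))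
  · rintro ⟨z⟩
    obtain ⟨x, hx⟩ := exists_gateSetoid_comp_apply u v z
    exact ⟨Quot.mk _ x, Quot.sound (Setoid.symm' _ hx)⟩

theorem bijOn_periodicPts_comp (u : α → β) (v : β → α) :
    BijOn u (periodicPts (v ∘ u)) (periodicPts (u ∘ v)) := by
  refine ⟨(semiconj_comp_comp u v).mapsTo_periodicPts, fun x hx y hy h => (bijOn_periodicPts _).injOn hx hy (congrArg v h),
    fun z hz => ?_⟩
  obtain ⟨z', hz', rfl⟩ := (bijOn_periodicPts _).surjOn hz
  exact ⟨v z', (semiconj_comp_comp v u).mapsTo_periodicPts hz', rfl⟩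

end Dynamics

section CompSeqFn

variable {α : Type*} (g : ℕ → α → α)

theorem compSeqFn_succ_right {l k : ℕ} (h : l ≤ k + 1) :
    compSeqFn g l (k + 1) = g (k + 1) ∘ compSeqFn g l k := by
  rw [compSeqFn, show k + 1 + 1 - l = k + 1 - l + 1 by omega, List.range_succ, List.foldl_append,
    List.foldl_cons, List.foldl_nil, show l + (k + 1 - l) = k + 1 by omega]
  rfl

theorem compSeqFn_eq_comp_left {l k : ℕ} (h : l ≤ k) :
    compSeqFn g l k = compSeqFn g (l + 1) k ∘ g l := by
  induction k, h using Nat.le_induction with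
  | base => simp [compSeqFn]
  | succ k hlk ih =>
    rw [compSeqFn_succ_right g (by omega), ih, compSeqFn_succ_right g (by omega), comp_assoc]

theorem map_compSeqFn_rotation {β : Type*} (Φ : (α → α) → β)
    (hΦ : ∀ u v : α → α, Φ (v ∘ u) = Φ (u ∘ v)) {n : ℕ} (hn : 0 < n)
    (hper : ∀ t, 1 ≤ t → g (t + n) = g t) (k : ℕ) :
    Φ (compSeqFn g (k + 1) (k + n)) = Φ (compSeqFn g 1 n) := by
  induction k with
  | zero => simp
  | succ k ih =>
    rw [← ih, compSeqFn_eq_comp_left g (show k + 1 ≤ k + n by omega), ← hΦ,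
      show k + 1 + n = k + n + 1 by omega, compSeqFn_succ_right g (by omega),
      show k + n + 1 = k + 1 + n by omega, hper (k + 1) (by omega)]

end CompSeqFn

theorem stmt2_general {α : Type*} [Fintype α] (n : ℕ) (g : ℕ → α → α)
    (hper : ∀ t, 1 ≤ t → g (t + n) = g t) :
    ∀ k l, 1 ≤ k → k ≤ n → 1 ≤ l → l ≤ n →
      (gates (compSeqFn g (k + 1) (k + n))).ncard =
          (gates (compSeqFn g (l + 1) (l + n))).ncard ∧
        (Function.periodicPts (compSeqFn g (k + 1) (k + n))).ncard =
          (Function.periodicPts (compSeqFn g (l + 1) (l + n))).ncard := by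
  intro k l hk hkn _ _
  have hn : 0 < n := by omega
  have hgates := map_compSeqFn_rotation g (fun f => (gates f).ncard) ncard_gates_comp hn hper
  have hperiodic := map_compSeqFn_rotation g (fun f => (periodicPts f).ncard)
    (fun u v => (bijOn_periodicPts_comp u v).ncard_eq) hn hper
  exact ⟨(hgates k).trans (hgates l).symm, (hperiodic k).trans (hperiodic l).symm⟩

/-- Let `g 1, …, g n : α → α` be arbitrary functions on a finite type
(extended periodically by `g (t + n) = g t`), and for `1 ≤ k ≤ n` let
`f_k := g k ∘ ⋯ ∘ g 1 ∘ g n ∘ ⋯ ∘ g (k+1) = compSeqFn g (k+1) (k+n)` be the cyclic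
rotations of the composition.  Then all the `f_k` have the same number of gates and the
same number of periodic points. -/
theorem stmt2 {α : Type*} [Fintype α] (n : ℕ) (hn : 0 < n) (g : ℕ → α → α)
    (hper : ∀ t, 1 ≤ t → g (t + n) = g t) :
    ∀ k l, 1 ≤ k → k ≤ n → 1 ≤ l → l ≤ n →
      (gates (compSeqFn g (k + 1) (k + n))).ncard =
          (gates (compSeqFn g (l + 1) (l + n))).ncard ∧
        (Function.periodicPts (compSeqFn g (k + 1) (k + n))).ncard =
          (Function.periodicPts (compSeqFn g (l + 1) (l + n))).ncard :=
  stmt2_general n g hper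
end

section
/- Let g_1, …, g_n be proper full fold automorphisms of F_r = FreeGroup (Fin r), where for each k the fold g_k sends x_{j_k} to x_{i_k}^{ε_k} · x_{j_k} or to x_{j_k} · x_{i_k}^{ε_k} and fixes all other basis elements. If q is an index with i_k ≠ q for every k (the letter x_q is never the introduced letter), then for every m ≠ q the reduced word of (g_n ∘ ⋯ ∘ g_1)(x_m) contains neither the letter x_q nor the letter x_q^{−1}; consequently the proper free factor Subgroup.closure {x_m : m ≠ q} of F_r is mapped into itself by g_n ∘ ⋯ ∘ g_1 (so if g_n ∘ ⋯ ∘ g_1 represents an irreducible train track map, every basis index occurs as an introduced index i_k for some k). -/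
/-- The free group `F_r` on the basis `x_1, …, x_r`. -/
abbrev FG (r : ℕ) := FreeGroup (Fin r)

/-- The group element corresponding to the letter `(i, b)`:
`x_i` if `b = true`, and `x_i⁻¹` if `b = false`. -/
def letter {r : ℕ} (x : Fin r × Bool) : FG r :=
  if x.2 then FreeGroup.of x.1 else (FreeGroup.of x.1)⁻¹

/-- `φ` is the proper full fold with introduced index `i`, folded index `j` and sign `ε`:
`φ (x j) = x_i^ε * x_j` or `φ (x j) = x_j * x_i^ε`, and `φ` fixes every other basis
element. -/
def IsFoldWith {r : ℕ} (φ : FG r →* FG r) (i j : Fin r) (ε : Bool) : Prop :=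
  i ≠ j ∧
    (φ (FreeGroup.of j) = letter (i, ε) * FreeGroup.of j ∨
      φ (FreeGroup.of j) = FreeGroup.of j * letter (i, ε)) ∧
    ∀ m : Fin r, m ≠ j → φ (FreeGroup.of m) = FreeGroup.of m

/-- `φ` is a proper full fold automorphism of `F_r`. -/
def IsProperFullFold {r : ℕ} (φ : FG r →* FG r) : Prop :=
  ∃ i j ε, IsFoldWith φ i j ε

/-- `φ` is cancellation-free on `w`: the length of the reduced word of `φ w` is the sum of
the lengths `ℓ (φ y)` over the letters `y` of the reduced word of `w`. -/
def CancellationFree {r : ℕ} (φ : FG r →* FG r) (w : FG r) : Prop :=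
  (φ w).toWord.length = (w.toWord.map fun y => (φ (letter y)).toWord.length).sum

/-- `foldComp G l k = G k ∘ G (k - 1) ∘ ⋯ ∘ G l` (the identity if `k + 1 ≤ l`). -/
def foldComp {r : ℕ} (G : ℕ → (FG r →* FG r)) (l k : ℕ) : FG r →* FG r :=
  (List.range (k + 1 - l)).foldl (fun acc t => (G (l + t)).comp acc) (MonoidHom.id _)

/-- `g` is a train track composition: for every `p ≥ 0` and every basis index `m`,
`g` is cancellation-free on `g^p (x m)`. -/
def IsTrainTrack {r : ℕ} (g : FG r →* FG r) : Prop :=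
  ∀ (p : ℕ) (m : Fin r), CancellationFree g ((⇑g)^[p] (FreeGroup.of m))



/-! Since no fold introduces the letter `x_q`, every fold maps each basis element
`x_m` with `m ≠ q` into `⟨x_m : m ≠ q⟩`; hence so does the composition, and elements of
that subgroup have reduced words avoiding `x_q^{±1}`. -/

namespace FreeGroup

variable {α : Type*} [DecidableEq α]

def wordsOver (S : Set α) : Subgroup (FreeGroup α) where
  carrier := {w | ∀ x ∈ w.toWord, x.1 ∈ S}
  one_mem' := by simp
  mul_mem' {a c} ha hc x hx := by
    rcases List.mem_append.1 ((toWord_mul_sublist a c).mem hx) with h | h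
    exacts [ha x h, hc x h]
  inv_mem' {a} ha x hx := by
    rw [toWord_inv] at hx
    simp only [invRev, List.mem_reverse, List.mem_map] at hx
    obtain ⟨y, hy, rfl⟩ := hx
    exact ha y hy

theorem closure_of_image_le_wordsOver (S : Set α) :
    Subgroup.closure (of '' S) ≤ wordsOver S := by
  rw [Subgroup.closure_le]
  rintro _ ⟨m, hm, rfl⟩ x hx
  rw [toWord_of, List.mem_singleton] at hx
  simpa [hx] using hm

end FreeGroup

theorem Subgroup.map_foldl_comp_le {M ι : Type*} [Group M] {H : Subgroup M}
    (f : ι → M →* M) (L : List ι) (hf : ∀ t ∈ L, H.map (f t) ≤ H)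
    {acc : M →* M} (hacc : H.map acc ≤ H) :
    H.map (L.foldl (fun acc t => (f t).comp acc) acc) ≤ H := by
  induction L generalizing acc with
  | nil => exact hacc
  | cons t L ih =>
    refine ih (fun s hs => hf s (List.mem_cons_of_mem t hs)) ?_
    rw [← Subgroup.map_map]
    exact (Subgroup.map_mono hacc).trans (hf t List.mem_cons_self)

theorem map_foldComp_le {r : ℕ} {G : ℕ → (FG r →* FG r)} {H : Subgroup (FG r)} {l n : ℕ}
    (hG : ∀ k, l ≤ k → k ≤ n → H.map (G k) ≤ H) : H.map (foldComp G l n) ≤ H := by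
  refine Subgroup.map_foldl_comp_le _ _ (fun t ht => hG _ (by omega) ?_) (by simp)
  rw [List.mem_range] at ht
  omega

theorem letter_mem_closure_of_image {r : ℕ} {S : Set (Fin r)} {x : Fin r × Bool}
    (hx : x.1 ∈ S) : letter x ∈ Subgroup.closure (FreeGroup.of '' S) := by
  have h := Subgroup.subset_closure (Set.mem_image_of_mem FreeGroup.of hx)
  unfold letter
  split_ifs
  exacts [h, inv_mem h]

theorem IsFoldWith.map_closure_le {r : ℕ} {φ : FG r →* FG r} {i j : Fin r} {ε : Bool}
    (hφ : IsFoldWith φ i j ε) {S : Set (Fin r)} (hi : i ∈ S) :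
    (Subgroup.closure (FreeGroup.of '' S)).map φ ≤ Subgroup.closure (FreeGroup.of '' S) := by
  obtain ⟨-, hj, hfix⟩ := hφ
  rw [MonoidHom.map_closure, Subgroup.closure_le, ← Set.image_comp]
  rintro _ ⟨m, hm, rfl⟩
  have hxm := Subgroup.subset_closure (Set.mem_image_of_mem FreeGroup.of hm)
  have hxi := letter_mem_closure_of_image (x := (i, ε)) hi
  by_cases hmj : m = j
  · subst hmj
    rcases hj with h | h <;> simp only [Function.comp_apply, h]
    exacts [mul_mem hxi hxm, mul_mem hxm hxi]
  · simpa [hfix m hmj] using hxm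

theorem stmt9_general (r n : ℕ) (G : ℕ → (FG r →* FG r))
    (idx jdx : ℕ → Fin r) (ε : ℕ → Bool)
    (hfold : ∀ k, 1 ≤ k → k ≤ n → IsFoldWith (G k) (idx k) (jdx k) (ε k))
    (q : Fin r) (hq : ∀ k, 1 ≤ k → k ≤ n → idx k ≠ q) :
    (∀ m : Fin r, m ≠ q → ∀ b : Bool,
        (q, b) ∉ ((foldComp G 1 n) (FreeGroup.of m)).toWord) ∧
      Subgroup.map (foldComp G 1 n)
          (Subgroup.closure {w : FG r | ∃ m : Fin r, m ≠ q ∧ w = FreeGroup.of m}) ≤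
        Subgroup.closure {w : FG r | ∃ m : Fin r, m ≠ q ∧ w = FreeGroup.of m} := by
  have hgens :
      {w : FG r | ∃ m : Fin r, m ≠ q ∧ w = FreeGroup.of m} = FreeGroup.of '' {q}ᶜ := by
    ext w
    simp [eq_comm]
  rw [hgens]
  have hinv : (Subgroup.closure (FreeGroup.of '' {q}ᶜ)).map (foldComp G 1 n) ≤
      Subgroup.closure (FreeGroup.of '' {q}ᶜ) :=
    map_foldComp_le fun k hk1 hkn => (hfold k hk1 hkn).map_closure_le (hq k hk1 hkn)
  refine ⟨fun m hm b hb => ?_, hinv⟩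
  have hxm := Subgroup.subset_closure
    (Set.mem_image_of_mem FreeGroup.of (Set.mem_compl_singleton_iff.2 hm))
  exact FreeGroup.closure_of_image_le_wordsOver _ (hinv ⟨_, hxm, rfl⟩) (q, b) hb rfl

/-- Let `G 1, …, G n` be proper full folds of `F_r`, where `G k` is the
fold with introduced index `idx k`, folded index `jdx k` and sign `ε k`.  If `q` is an
index with `idx k ≠ q` for every `k` (the letter `x q` is never the introduced letter),
then for every `m ≠ q` the reduced word of `(G n ∘ ⋯ ∘ G 1) (x m)` contains neither the
letter `x q` nor the letter `x q⁻¹`; consequently the proper free factor generated by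
`{x m : m ≠ q}` is mapped into itself by `G n ∘ ⋯ ∘ G 1`. -/
theorem stmt9 (r n : ℕ) (hn : 0 < n) (G : ℕ → (FG r →* FG r))
    (idx jdx : ℕ → Fin r) (ε : ℕ → Bool)
    (hfold : ∀ k, 1 ≤ k → k ≤ n → IsFoldWith (G k) (idx k) (jdx k) (ε k))
    (q : Fin r) (hq : ∀ k, 1 ≤ k → k ≤ n → idx k ≠ q) :
    (∀ m : Fin r, m ≠ q → ∀ b : Bool,
        (q, b) ∉ ((foldComp G 1 n) (FreeGroup.of m)).toWord) ∧
      Subgroup.map (foldComp G 1 n)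
          (Subgroup.closure {w : FG r | ∃ m : Fin r, m ≠ q ∧ w = FreeGroup.of m}) ≤
        Subgroup.closure {w : FG r | ∃ m : Fin r, m ≠ q ∧ w = FreeGroup.of m} :=
  stmt9_general r n G idx jdx ε hfold q hq
end
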